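/- arXiv:1801.09575 — 2 statements merged into one kernel-verified Lean document; each statement's English description precedes it below -/
import Mathlib

section
/- Let F be an ordered field and n ≥ 2. The polynomial x₁² + x₂² + ⋯ + xₙ² − 1 is irreducible in F[x₁, …, xₙ]. -/
/-!
Under `finSuccEquiv` the polynomial becomes `X² − c` over `R = F[x₂, …, xₙ]`, with
`c = 1 − ∑ xᵢ²`. As `R` is integrally closed, Gauss's lemma reduces irreducibility to `c` not
being a square in `R`, and it is not: evaluated at `(2, …, 2)` it is negative.
-/

namespace Polynomial

theorem X_pow_sub_C_irreducible_of_prime_of_isIntegrallyClosed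
    {R : Type*} [CommRing R] [IsDomain R] [IsIntegrallyClosed R]
    {p : ℕ} (hp : p.Prime) {c : R} (hc : ∀ r : R, r ^ p ≠ c) :
    Irreducible (X ^ p - C c : R[X]) := by
  have hmonic : (X ^ p - C c : R[X]).Monic := monic_X_pow_sub_C c hp.ne_zero
  rw [hmonic.irreducible_iff_irreducible_map_fraction_map (K := FractionRing R),
    Polynomial.map_sub, Polynomial.map_pow, map_X, map_C]
  refine X_pow_sub_C_irreducible_of_prime hp fun b hb ↦ ?_
  have hb_integral : IsIntegral R b := ⟨X ^ p - C c, hmonic, by simp [hb]⟩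
  obtain ⟨r, rfl⟩ := IsIntegrallyClosed.isIntegral_iff.mp hb_integral
  exact hc r (IsFractionRing.injective R (FractionRing R) (by rw [map_pow, hb]))

end Polynomial

namespace MvPolynomial

theorem not_isSquare_one_sub_sum_X_sq {σ F : Type*} [Fintype σ] [Nonempty σ]
    [Field F] [LinearOrder F] [IsStrictOrderedRing F] :
    ¬ IsSquare (1 - ∑ i, X i ^ 2 : MvPolynomial σ F) := by
  rintro ⟨r, hr⟩
  have h := congrArg (eval fun _ ↦ (2 : F)) hr
  simp only [map_sub, map_one, map_sum, map_pow, eval_X, map_mul, Finset.sum_const,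
    Finset.card_univ, nsmul_eq_mul] at h
  have hcard : (1 : F) ≤ Fintype.card σ := by exact_mod_cast Fintype.card_pos
  nlinarith [mul_self_nonneg (eval (fun _ ↦ (2 : F)) r)]

theorem finSuccEquiv_sum_X_sq_sub_one (R : Type*) [CommRing R] (m : ℕ) :
    finSuccEquiv R m (∑ i : Fin (m + 1), X i ^ 2 - 1) =
      Polynomial.X ^ 2 - Polynomial.C (1 - ∑ i : Fin m, X i ^ 2) := by
  simp only [Fin.sum_univ_succ, map_sub, map_add, map_sum, map_pow, map_one,
    finSuccEquiv_X_zero, finSuccEquiv_X_succ]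
  ring

end MvPolynomial

/-- Over an ordered field, the polynomial `x₁² + ⋯ + xₙ² − 1` is irreducible for `n ≥ 2`. -/
theorem stmt3 {F : Type*} [Field F] [LinearOrder F] [IsStrictOrderedRing F] (n : ℕ) (hn : 2 ≤ n) :
    Irreducible ((∑ i : Fin n, (MvPolynomial.X i) ^ 2) - 1 : MvPolynomial (Fin n) F) := by
  obtain ⟨m, rfl⟩ : ∃ m, n = m + 1 := ⟨n - 1, by omega⟩
  have : Nonempty (Fin m) := ⟨⟨0, by omega⟩⟩
  refine (MulEquiv.irreducible_iff (MvPolynomial.finSuccEquiv F m).toMulEquiv).mp ?_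
  change Irreducible (MvPolynomial.finSuccEquiv F m _)
  rw [MvPolynomial.finSuccEquiv_sum_X_sq_sub_one]
  exact Polynomial.X_pow_sub_C_irreducible_of_prime_of_isIntegrallyClosed Nat.prime_two
    fun r hr ↦ MvPolynomial.not_isSquare_one_sub_sum_X_sq ⟨r, by rw [← hr, sq]⟩
end

section
/- Let F be an ordered field and let H_i : Σⱼ a_{ij} xⱼ = c_i, 1 ≤ i ≤ m+1, be m+1 hyperplanes in F^m forming a simplex with vertices P₁, …, P_{m+1}, where P_i is the vertex opposite H_i (the intersection of all H_j for j ≠ i). Suppose each normal (a_{i1}, …, a_{im}) is outward pointing, i.e., Σⱼ a_{ij}(P_i)ⱼ < c_i for each i. Then the determinant of the (m+1)×(m+1) matrix whose i-th row is (1, (P_i)₁, …, (P_i)_m) is positive if and only if the determinant of the (m+1)×(m+1) matrix whose i-th row is (a_{i1}, …, a_{im}, c_i) is positive. -/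
/-!
Write `d i = c i - a i ⬝ᵥ P i`, which is positive because the normals point outward. Since `P i`
lies on every `H j` with `j ≠ i`, the matrix with rows `(P i, -1)` times the transpose of the
matrix with rows `(a j, c j)` is the diagonal matrix with entries `-d i`. Moving the column of
`-1`s to the front and negating it turns the first matrix into the vertex matrix, so the product
of the two determinants in the statement is `∏ i, d i > 0`, and they have the same sign.
-/

open Matrix

namespace Matrix

variable {R : Type*} [CommRing R] {n : ℕ}

theorem det_of_cons_eq_neg_one_pow_mul_det_of_snoc (x : Fin (n + 1) → R)
    (v : Fin (n + 1) → Fin n → R) :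
    (of fun i => Fin.cons (x i) (v i)).det = (-1) ^ n * (of fun i => Fin.snoc (v i) (x i)).det := by
  have hrot : (of fun i => Fin.cons (x i) (v i) : Matrix _ _ R) =
      (of fun i => Fin.snoc (v i) (x i)).submatrix id (finRotate (n + 1)).symm := by
    ext i j
    refine Fin.cases ?_ (fun k => ?_) j
    · have h0 : (finRotate (n + 1)).symm 0 = Fin.last n := by
        rw [Equiv.symm_apply_eq, finRotate_last]
      simp [h0]
    · have hk : (finRotate (n + 1)).symm k.succ = k.castSucc := by
        rw [Equiv.symm_apply_eq, finRotate_apply, Fin.coeSucc_eq_succ]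
      simp [hk]
  rw [hrot, det_permute', Equiv.Perm.sign_symm, sign_finRotate]
  simp

theorem det_of_snoc_neg (x : Fin (n + 1) → R) (v : Fin (n + 1) → Fin n → R) :
    (of fun i => Fin.snoc (v i) (-x i)).det = -(of fun i => Fin.snoc (v i) (x i)).det := by
  set A : Matrix _ _ R := of fun i => Fin.snoc (v i) (x i)
  have hcol : (of fun i => Fin.snoc (v i) (-x i) : Matrix _ _ R) =
      A.updateCol (Fin.last n) ((-1 : R) • fun i => A i (Fin.last n)) := by
    ext i j
    refine Fin.lastCases ?_ (fun k => ?_) j <;> simp [A]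
  rw [hcol, det_updateCol_smul, neg_one_mul, updateCol_eq_self]

theorem of_snoc_mul_transpose_of_snoc_apply (P a : Fin (n + 1) → Fin n → R)
    (c : Fin (n + 1) → R) (i j : Fin (n + 1)) :
    ((of fun i => Fin.snoc (P i) (-1)) * (of fun j => Fin.snoc (a j) (c j))ᵀ) i j =
      a j ⬝ᵥ P i - c j := by
  simp only [mul_apply, Fin.sum_univ_castSucc, transpose_apply, of_apply, Fin.snoc_castSucc,
    Fin.snoc_last]
  rw [dotProduct_comm, dotProduct, neg_one_mul, sub_eq_add_neg]

theorem of_snoc_mul_transpose_eq_diagonal {P a : Fin (n + 1) → Fin n → R}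
    {c : Fin (n + 1) → R} (hmem : ∀ i j, j ≠ i → a j ⬝ᵥ P i = c j) :
    (of fun i => Fin.snoc (P i) (-1)) * (of fun j => Fin.snoc (a j) (c j))ᵀ =
      diagonal fun i => a i ⬝ᵥ P i - c i := by
  ext i j
  rw [of_snoc_mul_transpose_of_snoc_apply]
  rcases eq_or_ne j i with rfl | hji
  · rw [diagonal_apply_eq]
  · rw [diagonal_apply_ne' _ hji, hmem i j hji, sub_self]

theorem det_of_cons_one_mul_det_of_snoc {P a : Fin (n + 1) → Fin n → R}
    {c : Fin (n + 1) → R} (hmem : ∀ i j, j ≠ i → a j ⬝ᵥ P i = c j) :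
    (of fun i => Fin.cons 1 (P i)).det * (of fun i => Fin.snoc (a i) (c i)).det =
      ∏ i, (c i - a i ⬝ᵥ P i) := by
  have hdiag := congrArg det (of_snoc_mul_transpose_eq_diagonal hmem)
  rw [det_mul, det_transpose, det_diagonal, det_of_snoc_neg, ← neg_one_mul] at hdiag
  calc (of fun i => Fin.cons 1 (P i)).det * (of fun i => Fin.snoc (a i) (c i)).det
      = (-1) ^ (n + 1) * ((-1) * (of fun i => Fin.snoc (P i) 1).det *
          (of fun i => Fin.snoc (a i) (c i)).det) := by
        rw [det_of_cons_eq_neg_one_pow_mul_det_of_snoc]; ring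
    _ = ∏ i, (c i - a i ⬝ᵥ P i) := by
        have hsign := Finset.prod_neg (s := Finset.univ) fun i => a i ⬝ᵥ P i - c i
        simp only [neg_sub, Finset.card_univ, Fintype.card_fin] at hsign
        rw [hdiag, hsign]

end Matrix

theorem stmt10_general {F : Type*} [Field F] [LinearOrder F] [IsStrictOrderedRing F] (m : ℕ)
    (a : Fin (m + 1) → (Fin m → F)) (c : Fin (m + 1) → F)
    (P : Fin (m + 1) → (Fin m → F))
    -- `P i` is the vertex opposite `H_i`: it lies on every `H j`, `j ≠ i`, and is the
    -- unique such point
    (hmem : ∀ i j, j ≠ i → ∑ l, a j l * P i l = c j)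
    -- outward normals
    (hout : ∀ i, ∑ l, a i l * P i l < c i) :
    0 < (Matrix.of fun i => Fin.cons (1 : F) (P i)).det ↔
      0 < (Matrix.of fun i => Fin.snoc (a i) (c i)).det := by
  apply pos_iff_pos_of_mul_pos
  rw [det_of_cons_one_mul_det_of_snoc hmem]
  exact Finset.prod_pos fun i _ => sub_pos.mpr (hout i)

/-- For a simplex bounded by `m+1` hyperplanes with outward-pointing normals, the vertex
orientation determinant is positive iff the coefficient determinant is positive. -/
theorem stmt10 {F : Type*} [Field F] [LinearOrder F] [IsStrictOrderedRing F] (m : ℕ)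
    (a : Fin (m + 1) → (Fin m → F)) (c : Fin (m + 1) → F)
    (P : Fin (m + 1) → (Fin m → F))
    -- `P i` is the vertex opposite `H_i`: it lies on every `H j`, `j ≠ i`, and is the
    -- unique such point
    (hmem : ∀ i j, j ≠ i → ∑ l, a j l * P i l = c j)
    (huniq : ∀ i, ∀ x : Fin m → F, (∀ j, j ≠ i → ∑ l, a j l * x l = c j) → x = P i)
    -- outward normals
    (hout : ∀ i, ∑ l, a i l * P i l < c i) :
    0 < (Matrix.of fun i => Fin.cons (1 : F) (P i)).det ↔
      0 < (Matrix.of fun i => Fin.snoc (a i) (c i)).det :=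
  stmt10_general m a c P hmem hout
end
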